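/- There exists a Gauss diagram G (namely that of the figure eight knot diagram, with four arrows) such that A₄(G) = 1 and D₄(G) = 0, while the inverse diagram Ḡ (obtained by reversing the orientation of the circle) satisfies A₄(Ḡ) = 0 and D₄(Ḡ) = 1. -/
import Mathlib


/-!
A combinatorial model of Gauss diagrams of knot diagrams, following
Östlund, "Invariants of knot diagrams and relations among Reidemeister
moves".  Positions on the oriented circle are modeled by natural numbers,
listed in the cyclic order obtained by cutting the circle at a base point
which is not an endpoint of any arrow.
-/

/-- An arrow of a Gauss diagram: a signed, directed chord of the circle. -/
structure Arrow where
  tail : ℕ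
  head : ℕ
  sign : ℤ
deriving DecidableEq

/-- A Gauss diagram: a finite set of signed arrows on the circle. -/
abbrev GaussDiagram := Finset Arrow

/-- The endpoint positions of a Gauss diagram. -/
def endpoints (G : GaussDiagram) : Finset ℕ :=
  G.image Arrow.tail ∪ G.image Arrow.head

/-- The writhe of a Gauss diagram: the sum of the signs of all its arrows. -/
def writhe (G : GaussDiagram) : ℤ := ∑ a ∈ G, a.sign

/-- `x` lies strictly inside the chord of the arrow `a`. -/
def inArc (a : Arrow) (x : ℕ) : Prop :=
  min a.tail a.head < x ∧ x < max a.tail a.head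

/-- Two arrows cross: their endpoints interleave on the circle. -/
def Crosses (a b : Arrow) : Prop := Xor' (inArc a b.tail) (inArc a b.head)

/-- Strict cyclic betweenness: starting at `x` and moving in the positive
direction along the circle one meets `y` strictly before `z`. -/
def CycBtw (x y z : ℕ) : Prop :=
  (x < y ∧ y < z) ∨ (y < z ∧ z < x) ∨ (z < x ∧ x < y)

/-- `x` and `y` are cyclically adjacent among the points of `E`: no point of
`E` lies strictly between them on one of the two arcs joining them. -/
def AdjacentIn (E : Finset ℕ) (x y : ℕ) : Prop :=
  x ∈ E ∧ y ∈ E ∧ x ≠ y ∧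
    ((∀ z ∈ E, z ≤ min x y ∨ max x y ≤ z) ∨ (∀ z ∈ E, min x y ≤ z ∧ z ≤ max x y))

/-- `y` is the immediate cyclic successor of `x` among the points of `E`. -/
def SuccIn (E : Finset ℕ) (x y : ℕ) : Prop :=
  x ∈ E ∧ y ∈ E ∧ x ≠ y ∧
    ((x < y ∧ ∀ z ∈ E, ¬(x < z ∧ z < y)) ∨ (y < x ∧ ∀ z ∈ E, y ≤ z ∧ z ≤ x))

/-- An arrow is isolated in `G` if its head and tail are adjacent among all
endpoints of `G`. -/
def Isolated (G : GaussDiagram) (a : Arrow) : Prop :=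
  AdjacentIn (endpoints G) a.tail a.head

/-- An endpoint selector: the tail or the head of an arrow. -/
def EndSel (u : Arrow → ℕ) : Prop := u = Arrow.tail ∨ u = Arrow.head

/-- `S` matches the abstract pattern `P`: there is a bijection of arrows which
preserves heads/tails and the cyclic order of all endpoints (the signs of the
pattern arrows are ignored). -/
def MatchesPattern (P S : Finset Arrow) : Prop :=
  ∃ f : Arrow → Arrow, Set.BijOn f ↑P ↑S ∧
    ∀ u v w : Arrow → ℕ, EndSel u → EndSel v → EndSel w →
      ∀ a ∈ P, ∀ b ∈ P, ∀ c ∈ P,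
        (CycBtw (u a) (v b) (w c) ↔ CycBtw (u (f a)) (v (f b)) (w (f c)))

/-- The arrow-diagram invariant associated to a pattern `P`: the sum, over all
subdiagrams of `G` matching `P`, of the product of the signs of the arrows of
the subdiagram. -/
noncomputable def patCount (P : Finset Arrow) (G : GaussDiagram) : ℤ := by
  classical
  exact ∑ S ∈ G.powerset.filter (fun S => MatchesPattern P S), ∏ a ∈ S, a.sign

/-- The cyclic pattern `a_n`: `n` arrows arranged cyclically so that
consecutive arrows cross, meeting head to tail with the tail before the head,
and no other pairs cross. -/
def patternA (n : ℕ) : Finset Arrow :=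
  (Finset.range n).image (fun i => ⟨2 * i, (2 * i + 3) % (2 * n), 1⟩)

/-- Orientation reversal of a Gauss diagram. -/
def revDiagram (G : GaussDiagram) : GaussDiagram :=
  G.image (fun a =>
    ⟨(endpoints G).sup id - a.tail, (endpoints G).sup id - a.head, a.sign⟩)

/-- Mirroring: negate the signs of all arrows. -/
def mirror (G : GaussDiagram) : GaussDiagram :=
  G.image (fun a => ⟨a.tail, a.head, -a.sign⟩)

/-- The pattern `d_n`: the orientation reversal of `a_n`. -/
def patternD (n : ℕ) : Finset Arrow := revDiagram (patternA n)

/-- The pattern `w_n` (`n` odd): `n` pairwise crossing "diameters", directed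
so that no two arrow heads are adjacent among the `2n` endpoints. -/
def patternW (n : ℕ) : Finset Arrow :=
  (Finset.range n).image
    (fun i => if i % 2 = 0 then ⟨i + n, i, 1⟩ else ⟨i, i + n, 1⟩)

/-- The knot diagram invariant `A_n`. -/
noncomputable def A (n : ℕ) (G : GaussDiagram) : ℤ := patCount (patternA n) G

/-- The knot diagram invariant `D_n`. -/
noncomputable def D (n : ℕ) (G : GaussDiagram) : ℤ := patCount (patternD n) G

/-- The knot diagram invariant `W_n` (the weirdness for `n = 3`). -/
noncomputable def W (n : ℕ) (G : GaussDiagram) : ℤ := patCount (patternW n) G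

/-- `G` is a connected sum of `G₁` and `G₂`: two points split the circle into
two arcs, every arrow of `G` has both endpoints on one of the arcs, and the
arrows on the two arcs form `G₁` and `G₂` respectively. -/
def IsConnectedSum (G G₁ G₂ : GaussDiagram) : Prop :=
  Disjoint G₁ G₂ ∧ G = G₁ ∪ G₂ ∧
    ∃ c : ℕ, (∀ a ∈ G₁, a.tail < c ∧ a.head < c) ∧
      (∀ a ∈ G₂, c < a.tail ∧ c < a.head)

/-- A valid crossing sign. -/
def IsSign (s : ℤ) : Prop := s = 1 ∨ s = -1

/-- A positively directed Ω₁-move: adds one isolated arrow of sign `j`. -/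
def Omega1Add (G G' : GaussDiagram) (j : ℤ) : Prop :=
  ∃ a : Arrow, a ∉ G ∧ a.tail ≠ a.head ∧ a.sign = j ∧ IsSign j ∧
    G' = insert a G ∧ Isolated G' a

/-- An Ω₁-move (in either direction). -/
def IsOmega1 (G G' : GaussDiagram) : Prop :=
  (∃ j, Omega1Add G G' j) ∨ (∃ j, Omega1Add G' G j)

/-- A positively directed Ω₂-move: adds two arrows of opposite signs whose
tails are adjacent and whose heads are adjacent on the circle. -/
def Omega2Add (G G' : GaussDiagram) : Prop :=
  ∃ a b : Arrow, a ∉ G ∧ b ∉ G ∧ a ≠ b ∧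
    a.tail ≠ a.head ∧ b.tail ≠ b.head ∧
    IsSign a.sign ∧ b.sign = -a.sign ∧
    G' = insert a (insert b G) ∧
    AdjacentIn (endpoints G') a.tail b.tail ∧
    AdjacentIn (endpoints G') a.head b.head

/-- An Ω₂-move (in either direction). -/
def IsOmega2 (G G' : GaussDiagram) : Prop := Omega2Add G G' ∨ Omega2Add G' G

/-- The data of an Ω₃-move on `G`: three mutually crossing arrows of `G`
whose six endpoints form three sites of two adjacent endpoints each (one site
on each of the three strands of the changing disk), the arrows joining the
three sites pairwise. -/
structure Omega3Data (G : GaussDiagram) where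
  a : Arrow
  b : Arrow
  c : Arrow
  q1 : ℕ
  q2 : ℕ
  q3 : ℕ
  q4 : ℕ
  q5 : ℕ
  q6 : ℕ
  ha : a ∈ G
  hb : b ∈ G
  hc : c ∈ G
  hab : a ≠ b
  hac : a ≠ c
  hbc : b ≠ c
  cab : Crosses a b
  cac : Crosses a c
  cbc : Crosses b c
  adj12 : AdjacentIn (endpoints G) q1 q2
  adj34 : AdjacentIn (endpoints G) q3 q4
  adj56 : AdjacentIn (endpoints G) q5 q6
  ea : ({a.tail, a.head} : Finset ℕ) ⊆ {q1, q2, q3, q4}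
  eb : ({b.tail, b.head} : Finset ℕ) ⊆ {q1, q2, q5, q6}
  ec : ({c.tail, c.head} : Finset ℕ) ⊆ {q3, q4, q5, q6}
  hq : ({q1, q2, q3, q4, q5, q6} : Finset ℕ) =
    {a.tail, a.head, b.tail, b.head, c.tail, c.head}

/-- Interchange the two adjacent endpoints at each of the three sites. -/
def swap6 (q1 q2 q3 q4 q5 q6 x : ℕ) : ℕ :=
  if x = q1 then q2 else if x = q2 then q1 else
  if x = q3 then q4 else if x = q4 then q3 else
  if x = q5 then q6 else if x = q6 then q5 else x

/-- The effect of the Ω₃-move on an arrow. -/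
def Omega3Data.mapArrow {G : GaussDiagram} (d : Omega3Data G) (e : Arrow) : Arrow :=
  ⟨swap6 d.q1 d.q2 d.q3 d.q4 d.q5 d.q6 e.tail,
   swap6 d.q1 d.q2 d.q3 d.q4 d.q5 d.q6 e.head, e.sign⟩

/-- The result of the Ω₃-move determined by `d`: the two adjacent endpoints at
each of the three sites are interchanged, all other arrows are unchanged. -/
def Omega3Move (G : GaussDiagram) (d : Omega3Data G) : GaussDiagram :=
  (G \ {d.a, d.b, d.c}) ∪ {d.mapArrow d.a, d.mapArrow d.b, d.mapArrow d.c}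

/-- An Ω₃-move (in either direction). -/
def IsOmega3 (G G' : GaussDiagram) : Prop :=
  (∃ d : Omega3Data G, G' = Omega3Move G d) ∨
  (∃ d : Omega3Data G', G = Omega3Move G' d)

/-- `x` is the position of a tail of one of the three affected arrows. -/
def TailPos {G : GaussDiagram} (d : Omega3Data G) (x : ℕ) : Prop :=
  x = d.a.tail ∨ x = d.b.tail ∨ x = d.c.tail

/-- `x` is the position of a head of one of the three affected arrows. -/
def HeadPos {G : GaussDiagram} (d : Omega3Data G) (x : ℕ) : Prop :=
  x = d.a.head ∨ x = d.b.head ∨ x = d.c.head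

/-- The move determined by `d` has class `Ω₃ᵢⱼₖₘ`: listing the three sites in
the order top, middle, bottom strand (paired each with the opposite arrow,
i.e., the one not meeting that site), the top site carries two tails (two
overcrossings) and the bottom site two heads; `i`, `j`, `k` are the signs of
the crossings between the top–middle, top–bottom and middle–bottom strands
respectively, and `m = 1` iff the move is descending, i.e. the three strands
are visited in the cyclic order top–middle–bottom along the knot. -/
def Omega3Data.IsClass {G : GaussDiagram} (d : Omega3Data G) (i j k m : ℤ) : Prop :=
  (m = 1 ∨ m = -1) ∧
  ∃ p : Fin 3 → (ℕ × ℕ) × Arrow,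
    Set.range p = {((d.q1, d.q2), d.c), ((d.q3, d.q4), d.b), ((d.q5, d.q6), d.a)} ∧
    TailPos d (p 0).1.1 ∧ TailPos d (p 0).1.2 ∧
    HeadPos d (p 2).1.1 ∧ HeadPos d (p 2).1.2 ∧
    (p 2).2.sign = i ∧ (p 1).2.sign = j ∧ (p 0).2.sign = k ∧
    (m = 1 ↔ CycBtw (p 0).1.1 (p 1).1.1 (p 2).1.1)

/-- An Ω₃-move of class `Ω₃ᵢⱼₖₘ` (in either direction; the class of a move
does not depend on the direction in which it is performed). -/
def IsOmega3Class (i j k m : ℤ) (G G' : GaussDiagram) : Prop :=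
  (∃ d : Omega3Data G, G' = Omega3Move G d ∧ d.IsClass i j k m) ∨
  (∃ d : Omega3Data G', G = Omega3Move G' d ∧ d.IsClass i j k m)

/-- A descending Ω₃-move. -/
def IsDescendingOmega3 (G G' : GaussDiagram) : Prop :=
  ∃ i j k, IsOmega3Class i j k 1 G G'

/-- An ascending Ω₃-move. -/
def IsAscendingOmega3 (G G' : GaussDiagram) : Prop :=
  ∃ i j k, IsOmega3Class i j k (-1) G G'

/-- A Reidemeister move of Gauss diagrams. -/
def RMove (G G' : GaussDiagram) : Prop :=
  IsOmega1 G G' ∨ IsOmega2 G G' ∨ IsOmega3 G G'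

/-! ### Auxiliary material for Statement 8 -/

instance instDecCycBtw (x y z : ℕ) : Decidable (CycBtw x y z) := by
  unfold CycBtw; infer_instance

/-- The Gauss diagram of the figure eight knot diagram. -/
def figEight : GaussDiagram := {⟨0,3,1⟩, ⟨2,5,1⟩, ⟨4,7,-1⟩, ⟨6,1,-1⟩}

lemma card_of_matches {P S : Finset Arrow} (h : MatchesPattern P S) :
    S.card = P.card := by
  obtain ⟨f, hbij, -⟩ := h
  have h1 : (↑S : Set Arrow) = f '' ↑P := hbij.image_eq.symm
  have h2 := Set.ncard_image_of_injOn hbij.injOn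
  rw [← Set.ncard_coe_finset, ← Set.ncard_coe_finset, h1, h2]

lemma patCount_eq_prod {P G : Finset Arrow} (hc : P.card = G.card)
    (hm : MatchesPattern P G) : patCount P G = ∏ a ∈ G, a.sign := by
  classical
  unfold patCount
  have hfil : (G.powerset.filter (fun S => MatchesPattern P S)) = {G} := by
    ext S
    simp only [Finset.mem_filter, Finset.mem_powerset, Finset.mem_singleton]
    constructor
    · rintro ⟨hS, hMS⟩
      exact (Finset.eq_of_subset_of_card_le hS
        (by rw [card_of_matches hMS, hc]))
    · rintro rfl; exact ⟨Finset.Subset.refl _, hm⟩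
  rw [hfil, Finset.sum_singleton]

lemma patCount_eq_zero {P G : Finset Arrow} (hc : P.card = G.card)
    (hm : ¬ MatchesPattern P G) : patCount P G = 0 := by
  classical
  unfold patCount
  have hfil : (G.powerset.filter (fun S => MatchesPattern P S)) = ∅ := by
    ext S
    simp only [Finset.mem_filter, Finset.mem_powerset, Finset.notMem_empty,
      iff_false, not_and]
    intro hS hMS
    exact hm (by rwa [Finset.eq_of_subset_of_card_le hS
      (by rw [card_of_matches hMS, hc])] at hMS)
  rw [hfil, Finset.sum_empty]

/-- A sign-changing map induces a pattern match. -/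
lemma matches_of_signChange (P S : Finset Arrow) (s : Arrow → ℤ)
    (himg : P.image (fun a => (⟨a.tail, a.head, s a⟩ : Arrow)) = S)
    (hinj : ∀ a ∈ P, ∀ b ∈ P,
      (⟨a.tail, a.head, s a⟩ : Arrow) = ⟨b.tail, b.head, s b⟩ → a = b) :
    MatchesPattern P S := by
  refine ⟨fun a => ⟨a.tail, a.head, s a⟩, ?_, ?_⟩
  · have hinj' : Set.InjOn (fun a => (⟨a.tail, a.head, s a⟩ : Arrow)) ↑P :=
      fun a ha b hb hab => hinj a (Finset.mem_coe.mp ha) b (Finset.mem_coe.mp hb) hab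
    have := hinj'.bijOn_image
    rwa [← Finset.coe_image, himg] at this
  · intro u v w hu hv hw a _ b _ c _
    rcases hu with rfl | rfl <;> rcases hv with rfl | rfl <;> rcases hw with rfl | rfl <;> rfl

lemma matchesA_figEight : MatchesPattern (patternA 4) figEight := by
  apply matches_of_signChange _ _ (fun a => if a.tail ≤ 2 then 1 else -1) <;> decide

lemma matchesD_revFigEight : MatchesPattern (patternD 4) (revDiagram figEight) := by
  apply matches_of_signChange _ _ (fun a => if a.tail ≤ 3 then -1 else 1) <;> decide

lemma not_matchesD_figEight : ¬ MatchesPattern (patternD 4) figEight := by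
  rintro ⟨f, hbij, hcyc⟩
  have hd1 : (⟨7,4,1⟩ : Arrow) ∈ patternD 4 := by decide
  have hd3 : (⟨3,0,1⟩ : Arrow) ∈ patternD 4 := by decide
  have hd4 : (⟨1,6,1⟩ : Arrow) ∈ patternD 4 := by decide
  have m1 : f ⟨7,4,1⟩ ∈ figEight := hbij.mapsTo (Finset.mem_coe.mpr hd1)
  have m3 : f ⟨3,0,1⟩ ∈ figEight := hbij.mapsTo (Finset.mem_coe.mpr hd3)
  have m4 : f ⟨1,6,1⟩ ∈ figEight := hbij.mapsTo (Finset.mem_coe.mpr hd4)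
  have h13 := (hcyc Arrow.tail Arrow.tail Arrow.head (Or.inl rfl) (Or.inl rfl)
    (Or.inr rfl) _ hd1 _ hd3 _ hd1).mp (by decide)
  have h14 := (hcyc Arrow.tail Arrow.tail Arrow.head (Or.inl rfl) (Or.inl rfl)
    (Or.inr rfl) _ hd1 _ hd4 _ hd1).mp (by decide)
  have huniq : ∀ x ∈ figEight, ∀ y ∈ figEight, ∀ y' ∈ figEight,
      CycBtw x.tail y.tail x.head → CycBtw x.tail y'.tail x.head → y = y' := by decide
  have heq : f ⟨3,0,1⟩ = f ⟨1,6,1⟩ := huniq _ m1 _ m3 _ m4 h13 h14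
  have : (⟨3,0,1⟩ : Arrow) = ⟨1,6,1⟩ :=
    hbij.injOn (Finset.mem_coe.mpr hd3) (Finset.mem_coe.mpr hd4) heq
  simp at this

lemma not_matchesA_revFigEight : ¬ MatchesPattern (patternA 4) (revDiagram figEight) := by
  rintro ⟨f, hbij, hcyc⟩
  have hs1 : (⟨7,4,1⟩ : Arrow) ∈ revDiagram figEight := by decide
  have hs3 : (⟨3,0,-1⟩ : Arrow) ∈ revDiagram figEight := by decide
  have hs4 : (⟨1,6,-1⟩ : Arrow) ∈ revDiagram figEight := by decide
  obtain ⟨a, ha, hfa⟩ := hbij.surjOn (Finset.mem_coe.mpr hs1)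
  obtain ⟨b, hb, hfb⟩ := hbij.surjOn (Finset.mem_coe.mpr hs3)
  obtain ⟨b', hb', hfb'⟩ := hbij.surjOn (Finset.mem_coe.mpr hs4)
  have ha' := Finset.mem_coe.mp ha
  have hb'' := Finset.mem_coe.mp hb
  have hb''' := Finset.mem_coe.mp hb'
  have h13 : CycBtw a.tail b.tail a.head := by
    refine (hcyc Arrow.tail Arrow.tail Arrow.head (Or.inl rfl) (Or.inl rfl)
      (Or.inr rfl) _ ha' _ hb'' _ ha').mpr ?_
    rw [hfa, hfb]; decide
  have h14 : CycBtw a.tail b'.tail a.head := by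
    refine (hcyc Arrow.tail Arrow.tail Arrow.head (Or.inl rfl) (Or.inl rfl)
      (Or.inr rfl) _ ha' _ hb''' _ ha').mpr ?_
    rw [hfa, hfb']; decide
  have huniq : ∀ x ∈ patternA 4, ∀ y ∈ patternA 4, ∀ y' ∈ patternA 4,
      CycBtw x.tail y.tail x.head → CycBtw x.tail y'.tail x.head → y = y' := by decide
  have heq : b = b' := huniq _ ha' _ hb'' _ hb''' h13 h14
  rw [heq, hfb'] at hfb
  simp at hfb

/-- There is a Gauss diagram `G` with four arrows (that of
the figure eight knot diagram) with `A₄(G) = 1`, `D₄(G) = 0`, while its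
inverse (orientation reversal) `Ḡ` has `A₄(Ḡ) = 0`, `D₄(Ḡ) = 1`. -/
theorem exists_figure_eight_diagram :
    ∃ G : GaussDiagram, G.card = 4 ∧
      A 4 G = 1 ∧ D 4 G = 0 ∧
      A 4 (revDiagram G) = 0 ∧ D 4 (revDiagram G) = 1 := by
  refine ⟨figEight, by decide, ?_, ?_, ?_, ?_⟩
  · rw [A, patCount_eq_prod (by decide) matchesA_figEight]; decide
  · rw [D, patCount_eq_zero (by decide) not_matchesD_figEight]
  · rw [A, patCount_eq_zero (by decide) not_matchesA_revFigEight]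
  · rw [D, patCount_eq_prod (by decide) matchesD_revFigEight]; decide
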